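/- arXiv:math/0411184 — 2 statements merged into one kernel-verified Lean document; each statement's English description precedes it below -/
import Mathlib

section
/- Let μ ∈ ℂ and let x₀ ∈ ℂ with x₀² ≠ 4. Suppose (yₙ)ₙ∈ℤ is a bi-infinite sequence of complex numbers such that for every n, (x₀, yₙ, yₙ₊₁) is a μ-Markoff triple and yₙ₋₁ + yₙ₊₁ = x₀yₙ. Write x₀ = λ + λ⁻¹ with λ ≠ ±1. Then there exist A, B ∈ ℂ with AB = (x₀² − μ)/(x₀² − 4) such that yₙ = Aλⁿ + Bλ⁻ⁿ for all n ∈ ℤ. -/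
def MarkoffTriple (μ x y z : ℂ) : Prop := x^2 + y^2 + z^2 - x*y*z = μ

/-!
Since `x₀² - 4 = (l - l⁻¹)² ≠ 0`, the characteristic roots `l, l⁻¹` of the recurrence are distinct,
so `A lⁿ + B l⁻ⁿ` can be fitted to `y 0, y 1` and then agrees with `y` everywhere.
-/

theorem eq_of_recurrence_of_eq_zero_of_eq_one {R : Type*} [CommRing R] {c : R} {u v : ℤ → R}
    (hu : ∀ n, u (n - 1) + u (n + 1) = c * u n) (hv : ∀ n, v (n - 1) + v (n + 1) = c * v n)
    (h0 : u 0 = v 0) (h1 : u 1 = v 1) : u = v := by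
  suffices h : ∀ n : ℤ, u n = v n ∧ u (n + 1) = v (n + 1) from funext fun n => (h n).1
  intro n
  induction n using Int.induction_on with
  | zero => exact ⟨h0, h1⟩
  | succ k ih =>
    refine ⟨ih.2, ?_⟩
    have hu' := hu (k + 1)
    have hv' := hv (k + 1)
    rw [add_sub_cancel_right] at hu' hv'
    linear_combination hu' - hv' - ih.1 + c * ih.2
  | pred k ih =>
    refine ⟨?_, by rw [sub_add_cancel]; exact ih.1⟩
    linear_combination hu (-k) - hv (-k) - ih.2 + c * ih.1

theorem zpow_add_zpow_neg_recurrence {K : Type*} [Field K] {l : K} (hl : l ≠ 0) (A B : K)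
    (n : ℤ) :
    (A * l ^ (n - 1) + B * l ^ (-(n - 1))) + (A * l ^ (n + 1) + B * l ^ (-(n + 1))) =
      (l + l⁻¹) * (A * l ^ n + B * l ^ (-n)) := by
  rw [neg_sub, neg_add', zpow_sub_one₀ hl, zpow_add_one₀ hl, sub_eq_neg_add,
    zpow_add_one₀ hl, zpow_sub_one₀ hl]
  ring

theorem exists_add_eq_and_mul_add_mul_inv_eq {K : Type*} [Field K] {l : K} (hl : l - l⁻¹ ≠ 0)
    (p q : K) : ∃ A B : K, A + B = p ∧ A * l + B * l⁻¹ = q := by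
  refine ⟨(q - p * l⁻¹) / (l - l⁻¹), (p * l - q) / (l - l⁻¹), ?_, ?_⟩
  · rw [← add_div, div_eq_iff hl]
    ring
  · rw [div_mul_eq_mul_div, div_mul_eq_mul_div, ← add_div, div_eq_iff hl]
    ring

/-- With `x = l + l⁻¹`, `y₀ = A + B`, `y₁ = A l + B l⁻¹` this reads
`(x² - 4) A B = x y₀ y₁ - y₀² - y₁²`, and the Markoff equation turns the right side into `x² - μ`. -/
theorem sub_inv_sq_mul_eq {K : Type*} [Field K] {l : K} (hl : l ≠ 0) (A B : K) :
    (l - l⁻¹) ^ 2 * (A * B) =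
      (l + l⁻¹) * (A + B) * (A * l + B * l⁻¹) - (A + B) ^ 2 - (A * l + B * l⁻¹) ^ 2 := by
  field_simp
  ring

theorem markoff_neighbors_closed_form_general (μ x₀ l : ℂ) (y : ℤ → ℂ)
    (hl0 : l ≠ 0)
    (hx₀ : x₀ = l + l⁻¹) (hx4 : x₀^2 ≠ 4)
    (hM : ∀ n : ℤ, MarkoffTriple μ x₀ (y n) (y (n+1)))
    (hrec : ∀ n : ℤ, y (n-1) + y (n+1) = x₀ * y n) :
    ∃ A B : ℂ, A * B = (x₀^2 - μ)/(x₀^2 - 4) ∧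
      ∀ n : ℤ, y n = A * l^n + B * l^(-n) := by
  have hsq : (l - l⁻¹) ^ 2 = x₀ ^ 2 - 4 := by
    rw [hx₀]; field_simp; ring
  have hd : l - l⁻¹ ≠ 0 := fun h => hx4 (by linear_combination -hsq + (l - l⁻¹) * h)
  obtain ⟨A, B, hy0, hy1⟩ := exists_add_eq_and_mul_add_mul_inv_eq hd (y 0) (y 1)
  have hy : y = fun n => A * l ^ n + B * l ^ (-n) := by
    subst hx₀
    exact eq_of_recurrence_of_eq_zero_of_eq_one hrec (zpow_add_zpow_neg_recurrence hl0 A B)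
      (by simpa using hy0.symm) (by simpa using hy1.symm)
  refine ⟨A, B, ?_, fun n => congrFun hy n⟩
  rw [eq_div_iff (sub_ne_zero.mpr hx4)]
  have hM0 : x₀ ^ 2 + y 0 ^ 2 + y 1 ^ 2 - x₀ * y 0 * y 1 = μ := hM 0
  rw [← hy0, ← hy1] at hM0
  rw [← hsq, mul_comm, sub_inv_sq_mul_eq hl0, ← hM0, hx₀]
  ring

theorem markoff_neighbors_closed_form (μ x₀ l : ℂ) (y : ℤ → ℂ)
    (hl0 : l ≠ 0) (hl1 : l ≠ 1) (hl2 : l ≠ -1)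
    (hx₀ : x₀ = l + l⁻¹) (hx4 : x₀^2 ≠ 4)
    (hM : ∀ n : ℤ, MarkoffTriple μ x₀ (y n) (y (n+1)))
    (hrec : ∀ n : ℤ, y (n-1) + y (n+1) = x₀ * y n) :
    ∃ A B : ℂ, A * B = (x₀^2 - μ)/(x₀^2 - 4) ∧
      ∀ n : ℤ, y n = A * l^n + B * l^(-n) :=
  markoff_neighbors_closed_form_general μ x₀ l y hl0 hx₀ hx4 hM hrec
end

section
/- With the hypotheses of the previous item, if additionally |xₙ| > 2 for all n ∈ ℤ and x∞ ∈ (−2,2) ⊂ ℝ, then |xₙ² − μ| > 4 − x∞² > 0 for all n; in particular xₙ² is bounded away from μ. -/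
theorem MarkoffTriple.sq_sub_eq_mul_sub_sq {μ a w y z : ℂ} (hM : MarkoffTriple μ a y z)
    (hrec : w + z = a * y) : y ^ 2 - μ = w * z - a ^ 2 := by
  rw [← hM]
  linear_combination (-z) * hrec

theorem four_sub_norm_sq_lt_norm_mul_sub_sq {𝕜 : Type*} [NormedDivisionRing 𝕜] {w z : 𝕜}
    (hw : 2 < ‖w‖) (hz : 2 < ‖z‖) (c : 𝕜) : 4 - ‖c‖ ^ 2 < ‖w * z - c ^ 2‖ :=
  calc 4 - ‖c‖ ^ 2 < ‖w * z‖ - ‖c ^ 2‖ := by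
        rw [norm_mul, norm_pow]
        nlinarith
    _ ≤ ‖w * z - c ^ 2‖ := norm_sub_norm_le _ _

theorem markoff_bounded_away (μ : ℂ) (xinf : ℝ) (x : ℤ → ℂ)
    (hxinf : -2 < xinf ∧ xinf < 2)
    (hM : ∀ n : ℤ, MarkoffTriple μ (xinf : ℂ) (x n) (x (n+1)))
    (hrec : ∀ n : ℤ, x (n-1) + x (n+1) = (xinf : ℂ) * x n)
    (hbig : ∀ n : ℤ, 2 < ‖x n‖) :
    (0 < 4 - xinf^2) ∧ ∀ n : ℤ, 4 - xinf^2 < ‖(x n)^2 - μ‖ := by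
  refine ⟨by nlinarith [hxinf.1, hxinf.2], fun n => ?_⟩
  rw [(hM n).sq_sub_eq_mul_sub_sq (hrec n)]
  simpa [sq_abs] using four_sub_norm_sq_lt_norm_mul_sub_sq (hbig (n - 1)) (hbig (n + 1)) (xinf : ℂ)
end
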